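/- arXiv:math/9801136 — 6 statements merged into one kernel-verified Lean document; each statement's English description precedes it below -/
import Mathlib

section
/- If g is a polynomial over ℂ satisfying g(g(w)) = w for all w, then g is linear; more precisely, either g(w) = w for all w, or there exists b ∈ ℂ such that g(w) = -w + b for all w. -/
/-! Degrees multiply under composition, so `g` has degree one. Writing `g = a X + b`, the identity
`g ∘ g = a² X + (a b + b) = X` forces `a = ±1`, and `b = 0` when `a = 1`. -/

open Polynomial

theorem Polynomial.natDegree_eq_one_of_comp_self_eq_X {R : Type*} [Semiring R] [NoZeroDivisors R]
    [Nontrivial R] {g : R[X]} (h : g.comp g = X) : g.natDegree = 1 := by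
  have hdeg := congrArg natDegree h
  rw [natDegree_comp, natDegree_X] at hdeg
  exact Nat.eq_one_of_mul_eq_one_right hdeg

theorem Polynomial.C_mul_X_add_C_comp_self_eq_X {R : Type*} [Semiring R] {a b : R}
    (h : (C a * X + C b).comp (C a * X + C b) = X) : a * a = 1 ∧ a * b + b = 0 := by
  simp only [add_comp, C_mul_comp, X_comp, C_comp] at h
  constructor
  · simpa [mul_add, ← mul_assoc] using congrArg (coeff · 1) h
  · simpa [mul_add, ← mul_assoc] using congrArg (coeff · 0) h

/-- If `g` is a polynomial over `ℂ` with `g(g(w)) = w`, then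
either `g = w` or `g = -w + b` for some `b ∈ ℂ`. -/
theorem polynomial_involution_is_linear (g : Polynomial ℂ)
    (h : g.comp g = X) :
    g = X ∨ ∃ b : ℂ, g = -X + C b := by
  obtain ⟨a, -, b, rfl⟩ := natDegree_eq_one.mp (natDegree_eq_one_of_comp_self_eq_X h)
  obtain ⟨ha, hb⟩ := C_mul_X_add_C_comp_self_eq_X h
  rcases mul_self_eq_one_iff.mp ha with rfl | rfl
  · have hb0 : b = 0 := by linear_combination hb / 2
    simp [hb0]
  · exact Or.inr ⟨b, by simp⟩
end

section
/- Any anti-involution σ of the associative algebra of regular differential operators on the circle (generated by t, t⁻¹, and D = t·d/dt) that preserves the principal ℤ-gradation is of one of the following forms: σ(t) = -t, σ(D) = -D + b, or σ(t) = t, σ(D) = -D + b, for some b ∈ ℂ. -/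
open Polynomial

/-- The associative algebra `𝒟_as` of regular differential operators on the circle,
modeled as finitely supported families `(f_k)_{k ∈ ℤ}` of polynomials, the family `a`
representing `Σ_k t^k (a k)(D)` where `D = t ∂_t`. -/
noncomputable abbrev DOp := ℤ →₀ Polynomial ℂ

/-- Multiplication: `(t^k f(D)) ⬝ (t^l g(D)) = t^{k+l} f(D+l) g(D)`. -/
noncomputable def DOp.mul (a b : DOp) : DOp :=
  a.sum fun k f => b.sum fun l g =>
    Finsupp.single (k + l) (f.comp (X + C (l : ℂ)) * g)

/-- The element `t` of `𝒟_as`. -/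
noncomputable def DOp.t : DOp := Finsupp.single 1 1

/-- The element `D = t ∂_t` of `𝒟_as`. -/
noncomputable def DOp.D : DOp := Finsupp.single 0 X

lemma DOp.mul_single (k l : ℤ) (f g : Polynomial ℂ) :
    DOp.mul (Finsupp.single k f) (Finsupp.single l g)
      = Finsupp.single (k + l) (f.comp (X + C (l : ℂ)) * g) := by
  unfold DOp.mul
  rw [Finsupp.sum_single_index, Finsupp.sum_single_index]
  · simp
  · simp

lemma shift_const {r : Polynomial ℂ} (h : r.comp (X + C 1) = r) : ∃ c, r = C c := by
  have key : ∀ n : ℕ, r.eval ((n : ℂ)) = r.eval 0 := by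
    intro n
    induction n with
    | zero => simp
    | succ n ih =>
      have h2 := congrArg (Polynomial.eval ((n : ℂ))) h
      simp [Polynomial.eval_comp] at h2
      push_cast
      rw [← ih, ← h2]
  have hz : r - C (r.eval 0) = 0 := by
    apply Polynomial.eq_zero_of_infinite_isRoot
    apply Set.infinite_of_injective_forall_mem (f := fun n : ℕ => (n : ℂ))
    · exact fun a b hab => Nat.cast_injective hab
    · intro n
      simp [Polynomial.IsRoot, key n]
  exact ⟨r.eval 0, by linear_combination hz⟩

/-- any anti-involution `σ` of `𝒟_as` (a linear map with `σ² = id` and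
`σ(XY) = σ(Y)σ(X)`) preserving the principal `ℤ`-gradation satisfies either
`σ(t) = -t, σ(D) = -D + b` or `σ(t) = t, σ(D) = -D + b` for some `b ∈ ℂ`. -/
theorem anti_involution_classification (σ : DOp →ₗ[ℂ] DOp)
    (hinv : ∀ a : DOp, σ (σ a) = a)
    (hanti : ∀ a b : DOp, σ (DOp.mul a b) = DOp.mul (σ b) (σ a))
    (hgrad : ∀ (k : ℤ) (f : Polynomial ℂ), ∃ g : Polynomial ℂ,
      σ (Finsupp.single k f) = Finsupp.single k g) :
    ∃ b : ℂ,
      (σ DOp.t = -DOp.t ∧ σ DOp.D = -DOp.D + Finsupp.single 0 (C b)) ∨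
      (σ DOp.t = DOp.t ∧ σ DOp.D = -DOp.D + Finsupp.single 0 (C b)) := by
  classical
  -- representation of σ on each graded piece
  have hrep : ∀ (k : ℤ) (f : Polynomial ℂ),
      σ (Finsupp.single k f) = Finsupp.single k ((σ (Finsupp.single k f)) k) := by
    intro k f
    obtain ⟨g, hg⟩ := hgrad k f
    rw [hg, Finsupp.single_eq_same]
  set A : Polynomial ℂ → Polynomial ℂ := fun f => (σ (Finsupp.single 0 f)) 0 with hAdef
  have hA0 : ∀ f, σ (Finsupp.single 0 f) = Finsupp.single 0 (A f) := fun f => hrep 0 f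
  have hmul00 : ∀ f g : Polynomial ℂ,
      DOp.mul (Finsupp.single 0 f) (Finsupp.single 0 g) = Finsupp.single 0 (f * g) := by
    intro f g
    rw [DOp.mul_single]
    norm_num
  have hAmul : ∀ f g, A (f * g) = A g * A f := by
    intro f g
    have h1 : σ (Finsupp.single 0 (f * g)) = Finsupp.single (0:ℤ) (A g * A f) := by
      rw [← hmul00, hanti, hA0, hA0, hmul00]
    rw [hA0 (f * g)] at h1
    exact Finsupp.single_injective 0 h1
  have hAinv : ∀ f, A (A f) = f := by
    intro f
    have h1 := hinv (Finsupp.single 0 f)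
    rw [hA0, hA0] at h1
    exact Finsupp.single_injective 0 h1
  have hA1 : A 1 = 1 := by
    have h1 : A 1 = A 1 * A 1 := by
      have := hAmul 1 1
      rwa [mul_one] at this
    have h2 : A 1 * (A 1 - 1) = 0 := by ring_nf; linear_combination -h1
    rcases mul_eq_zero.1 h2 with h3 | h3
    · exfalso
      have h4 := hAinv 1
      rw [h3] at h4
      have hA0' : A 0 = 0 := by
        simp [hAdef]
      rw [hA0'] at h4
      exact one_ne_zero h4.symm
    · linear_combination h3
  have hAC : ∀ lam : ℂ, A (C lam) = C lam := by
    intro lam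
    have hs : Finsupp.single (0:ℤ) (C lam) = lam • Finsupp.single (0:ℤ) (1 : Polynomial ℂ) := by
      rw [Finsupp.smul_single]
      congr 1
      rw [Polynomial.smul_eq_C_mul, mul_one]
    have : A (C lam) = lam • A 1 := by
      simp only [hAdef, hs, map_smul, Finsupp.smul_apply]
    rw [this, hA1, Polynomial.smul_eq_C_mul, mul_one]
  have hAsub : ∀ f g, A (f - g) = A f - A g := by
    intro f g
    simp [hAdef, Finsupp.single_sub, map_sub]
  -- σ t
  set q : Polynomial ℂ := (σ DOp.t) 1 with hqdef
  have hq : σ DOp.t = Finsupp.single 1 q := hrep 1 1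
  have hmul_t : ∀ f : Polynomial ℂ,
      DOp.mul DOp.t (Finsupp.single 0 f) = Finsupp.single 1 f := by
    intro f
    unfold DOp.t
    rw [DOp.mul_single]
    norm_num
  have hσ1 : ∀ f, σ (Finsupp.single 1 f)
      = Finsupp.single 1 ((A f).comp (X + C 1) * q) := by
    intro f
    rw [← hmul_t f, hanti, hA0, hq, DOp.mul_single]
    norm_num
  -- q is a unit
  have hqu : (A q).comp (X + C 1) * q = 1 := by
    have h1 := hinv DOp.t
    rw [hq, hσ1] at h1
    have h2 : Finsupp.single (1:ℤ) ((A q).comp (X + C 1) * q)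
        = Finsupp.single (1:ℤ) (1 : Polynomial ℂ) := h1
    exact Finsupp.single_injective 1 h2
  have hqunit : IsUnit q := IsUnit.of_mul_eq_one _ (by rw [mul_comm]; exact hqu)
  obtain ⟨lam, hlamu, hClam⟩ := Polynomial.isUnit_iff.1 hqunit
  have hlamne : lam ≠ 0 := hlamu.ne_zero
  have hlamsq : lam * lam = 1 := by
    have h1 : (A q).comp (X + C 1) = C lam := by
      rw [← hClam, hAC, Polynomial.C_comp]
    rw [h1, ← hClam, ← Polynomial.C_mul, ← Polynomial.C_1] at hqu
    exact Polynomial.C_injective hqu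
  -- the key relation
  have hXrep : DOp.mul (Finsupp.single 0 (X - 1)) DOp.t = Finsupp.single 1 X := by
    unfold DOp.t
    rw [DOp.mul_single]
    norm_num [Polynomial.sub_comp]
  have hdagger : (A X).comp (X + C 1) * q = q * (A X - 1) := by
    have h1 := hσ1 X
    have h2 : σ (Finsupp.single 1 X) = Finsupp.single (1:ℤ) (q * A (X - 1)) := by
      rw [← hXrep, hanti, hA0, hq, DOp.mul_single]
      norm_num
    rw [h1] at h2
    have h3 := Finsupp.single_injective 1 h2
    rw [hAsub, hA1] at h3
    exact h3
  have hshift : (A X).comp (X + C 1) = A X - 1 := by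
    have h1 : (A X).comp (X + C 1) * C lam = (A X - 1) * C lam := by
      rw [← hClam] at hdagger
      rw [hdagger, mul_comm]
    exact mul_right_cancel₀ (Polynomial.C_ne_zero.2 hlamne) h1
  have hconst : ∃ c, A X + X = C c := by
    apply shift_const
    rw [Polynomial.add_comp, hshift, Polynomial.X_comp, Polynomial.C_1]
    ring
  obtain ⟨c, hc⟩ := hconst
  have hAX : A X = -X + C c := by linear_combination hc
  have hD : σ DOp.D = -DOp.D + Finsupp.single 0 (C c) := by
    show σ (Finsupp.single 0 X) = _
    rw [hA0, hAX]
    unfold DOp.D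
    rw [← Finsupp.single_neg, ← Finsupp.single_add]
  refine ⟨c, ?_⟩
  rcases mul_self_eq_one_iff.1 hlamsq with h | h
  · right
    refine ⟨?_, hD⟩
    rw [hq, ← hClam, h]
    unfold DOp.t
    rw [Polynomial.C_1]
  · left
    refine ⟨?_, hD⟩
    rw [hq, ← hClam, h]
    unfold DOp.t
    rw [← Finsupp.single_neg]
    norm_num
end

section
/- For each s ∈ ℂ, the map Θ_s on the algebra of differential operators on the circle determined by Θ_s(t) = t and Θ_s(D) = D + s is an automorphism, and it satisfies σ_{±,b} ∘ Θ_s = σ_{±,b+s} and Θ_{-s} ∘ σ_{±,b} = σ_{±,b+s}, where σ_{±,b} are the anti-involutions with σ_{±,b}(t) = ±t and σ_{±,b}(D) = -D + b. Consequently Θ_s maps the fixed subalgebra 𝒟^{±,b} of -σ_{±,b} isomorphically onto 𝒟^{±,b-2s}. -/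
open Polynomial

/-- The automorphism `Θ_s`: `t^k f(D) ↦ t^k f(D + s)`. -/
noncomputable def Theta (s : ℂ) (a : DOp) : DOp :=
  a.sum fun k f => Finsupp.single k (f.comp (X + C s))

/-- The anti-involution `σ_{ε,b}` (ε = ±1): `t^k f(D) ↦ ε^k t^k f(-D - k + b)`. -/
noncomputable def sigmaPM (ε b : ℂ) (a : DOp) : DOp :=
  a.sum fun k f => Finsupp.single k (ε ^ k • f.comp (C b - C (k : ℂ) - X))

/-!
`Θ_s` substitutes `D ↦ D + s` in every coefficient, and composing it with `σ_{ε,b}` merges the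
two affine substitutions into the one of `σ_{ε,b+s}`. Hence `σ_{ε,b-2s} ∘ Θ_s = Θ_s ∘ σ_{ε,b}`,
and the additive bijection `Θ_s` carries the `(-1)`-eigenspace of `σ_{ε,b}` onto that of
`σ_{ε,b-2s}`.
-/

theorem Finsupp.sum_single_apply_of_map_zero {α M N : Type*} [AddCommMonoid M] [AddCommMonoid N]
    (φ : α → M → N) (hφ : ∀ k, φ k 0 = 0) (a : α →₀ M) (m : α) :
    (a.sum fun k x => Finsupp.single k (φ k x)) m = φ m (a m) := by
  classical
  rw [Finsupp.sum_apply, Finsupp.sum]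
  simp only [Finsupp.single_apply, Finset.sum_ite_eq']
  split_ifs with h
  · rfl
  · rw [Finsupp.notMem_support_iff.mp h, hφ]

theorem Function.Semiconj.image_setOf_eq_neg {α β : Type*} [AddGroup α] [AddGroup β]
    {e : α ≃+ β} {σ : α → α} {τ : β → β} (h : Function.Semiconj e σ τ) :
    e '' {a | σ a = -a} = {b | τ b = -b} := by
  ext y
  obtain ⟨x, rfl⟩ := e.surjective y
  rw [Set.mem_ofPred_eq, ← h.eq, ← map_neg, e.injective.eq_iff, e.injective.mem_set_image]
  rfl

theorem theta_apply (s : ℂ) (a : DOp) (m : ℤ) : Theta s a m = (a m).comp (X + C s) := by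
  rw [Theta]
  exact Finsupp.sum_single_apply_of_map_zero (fun _ f => f.comp (X + C s)) (fun _ => zero_comp)
    a m

theorem sigmaPM_apply (ε b : ℂ) (a : DOp) (m : ℤ) :
    sigmaPM ε b a m = ε ^ m • (a m).comp (C b - C (m : ℂ) - X) := by
  rw [sigmaPM]
  exact Finsupp.sum_single_apply_of_map_zero _ (fun _ => by simp) a m

theorem theta_add (s : ℂ) (a a' : DOp) : Theta s (a + a') = Theta s a + Theta s a' := by
  ext1 m; simp only [theta_apply, Finsupp.add_apply, add_comp]

theorem theta_smul (s c : ℂ) (a : DOp) : Theta s (c • a) = c • Theta s a := by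
  ext1 m; simp only [theta_apply, Finsupp.smul_apply, smul_comp]

theorem theta_theta (s s' : ℂ) (a : DOp) : Theta s (Theta s' a) = Theta (s' + s) a := by
  ext1 m
  rw [theta_apply, theta_apply, theta_apply, comp_assoc, add_comp, X_comp, C_comp, add_assoc,
    ← C_add, add_comm s]

theorem theta_zero (a : DOp) : Theta 0 a = a := by
  ext1 m; rw [theta_apply, C_0, add_zero, comp_X]

theorem theta_neg_theta (s : ℂ) (a : DOp) : Theta (-s) (Theta s a) = a := by
  rw [theta_theta, add_neg_cancel, theta_zero]

theorem theta_theta_neg (s : ℂ) (a : DOp) : Theta s (Theta (-s) a) = a := by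
  simpa only [neg_neg] using theta_neg_theta (-s) a

noncomputable def thetaAddEquiv (s : ℂ) : DOp ≃+ DOp where
  toFun := Theta s
  invFun := Theta (-s)
  left_inv := theta_neg_theta s
  right_inv := theta_theta_neg s
  map_add' := theta_add s

theorem theta_eq_mapRange (s : ℂ) (a : DOp) :
    Theta s a = a.mapRange (·.comp (X + C s)) zero_comp := by
  ext1 m
  rw [theta_apply, Finsupp.mapRange_apply]

theorem theta_single (s : ℂ) (k : ℤ) (f : ℂ[X]) :
    Theta s (Finsupp.single k f) = Finsupp.single k (f.comp (X + C s)) :=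
  Finsupp.sum_single_index (by rw [zero_comp, Finsupp.single_zero])

/-- `Θ_s` is multiplicative because the substitution `D ↦ D + s` commutes with the shifts
`D ↦ D + l` occurring in the product. -/
theorem theta_mul (s : ℂ) (a a' : DOp) :
    Theta s (DOp.mul a a') = DOp.mul (Theta s a) (Theta s a') := by
  have shift_comm (l : ℤ) : (X + C (l : ℂ)).comp (X + C s) = (X + C s).comp (X + C (l : ℂ)) := by
    simp only [add_comp, X_comp, C_comp]
    ring
  change thetaAddEquiv s _ = _
  simp only [DOp.mul, map_finsuppSum, theta_eq_mapRange s a, theta_eq_mapRange s a']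
  rw [Finsupp.sum_mapRange_index (by simp)]
  refine Finsupp.sum_congr fun k _ => ?_
  rw [Finsupp.sum_mapRange_index (by simp)]
  refine Finsupp.sum_congr fun l _ => ?_
  change Theta s _ = _
  rw [theta_single, mul_comp, comp_assoc, comp_assoc, shift_comm]

theorem sigmaPM_theta (ε b s : ℂ) (a : DOp) :
    sigmaPM ε b (Theta s a) = sigmaPM ε (b + s) a := by
  ext1 m
  rw [sigmaPM_apply, sigmaPM_apply, theta_apply, comp_assoc, add_comp, X_comp, C_comp, C_add]
  congr 2
  ring

theorem theta_sigmaPM (ε b s : ℂ) (a : DOp) :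
    Theta s (sigmaPM ε b a) = sigmaPM ε (b - s) a := by
  ext1 m
  rw [theta_apply, sigmaPM_apply, sigmaPM_apply, smul_comp, comp_assoc, sub_comp, sub_comp,
    X_comp, C_comp, C_comp, C_sub]
  congr 2
  ring

theorem semiconj_theta_sigmaPM (ε b s : ℂ) :
    Function.Semiconj (Theta s) (sigmaPM ε b) (sigmaPM ε (b - 2 * s)) := fun a => by
  rw [sigmaPM_theta, theta_sigmaPM]
  congr 1
  ring

theorem theta_automorphism_and_sigma_relations_general (s b : ℂ) (ε : ℂ) :
    (∀ a b' : DOp, Theta s (DOp.mul a b') = DOp.mul (Theta s a) (Theta s b')) ∧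
    (∀ a b' : DOp, Theta s (a + b') = Theta s a + Theta s b') ∧
    (∀ (c : ℂ) (a : DOp), Theta s (c • a) = c • Theta s a) ∧
    (∀ a : DOp, Theta s (Theta (-s) a) = a) ∧
    (∀ a : DOp, Theta (-s) (Theta s a) = a) ∧
    (∀ a : DOp, sigmaPM ε b (Theta s a) = sigmaPM ε (b + s) a) ∧
    (∀ a : DOp, Theta (-s) (sigmaPM ε b a) = sigmaPM ε (b + s) a) ∧
    (Theta s '' {a : DOp | sigmaPM ε b a = -a} = {a : DOp | sigmaPM ε (b - 2 * s) a = -a}) :=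
  ⟨theta_mul s, theta_add s, theta_smul s, theta_theta_neg s, theta_neg_theta s,
    sigmaPM_theta ε b s, fun a => by rw [theta_sigmaPM, sub_neg_eq_add],
    (semiconj_theta_sigmaPM ε b s).image_setOf_eq_neg (e := thetaAddEquiv s)⟩

/-- `Θ_s` is an automorphism, `σ_{±,b} ∘ Θ_s = σ_{±,b+s}`,
`Θ_{-s} ∘ σ_{±,b} = σ_{±,b+s}`, and `Θ_s` maps the `-σ_{±,b}`-fixed subalgebra
`𝒟^{±,b}` onto `𝒟^{±,b-2s}`. -/
theorem theta_automorphism_and_sigma_relations (s b : ℂ) (ε : ℂ) (hε : ε = 1 ∨ ε = -1) :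
    (∀ a b' : DOp, Theta s (DOp.mul a b') = DOp.mul (Theta s a) (Theta s b')) ∧
    (∀ a b' : DOp, Theta s (a + b') = Theta s a + Theta s b') ∧
    (∀ (c : ℂ) (a : DOp), Theta s (c • a) = c • Theta s a) ∧
    (∀ a : DOp, Theta s (Theta (-s) a) = a) ∧
    (∀ a : DOp, Theta (-s) (Theta s a) = a) ∧
    (∀ a : DOp, sigmaPM ε b (Theta s a) = sigmaPM ε (b + s) a) ∧
    (∀ a : DOp, Theta (-s) (sigmaPM ε b a) = sigmaPM ε (b + s) a) ∧
    (Theta s '' {a : DOp | sigmaPM ε b a = -a} = {a : DOp | sigmaPM ε (b - 2 * s) a = -a}) :=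
  theta_automorphism_and_sigma_relations_general s b ε
end

section
/- Let 𝒫 = ⊕_j 𝒫_j be a parabolic subalgebra of 𝒟̂⁻ with characteristic polynomials b_k(w) (k ≥ 1). Then: (1) b_k ∈ ℂ[w] has parity equal to the parity of k (even polynomial for k even, odd consideration per the grading convention b_k ∈ ℂ[w]^{(k̄)}); (2) b_k(w) divides w·b_{k+1}(w - 1/2) and w·b_{k+1}(w + 1/2); (3) b_{k+l}(w) divides w·b_k(w - l/2)·b_l(w + k/2) for all k, l ≥ 1; consequently all b_k are nonzero and 𝒫_{-k} ≠ 0 for all k ≥ 1. -/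
open Polynomial

/-- In the graded Lie algebra `𝒟̂⁻`, whose degree-`k` piece is
`{t^k h(D + k/2) : h ∈ ℂ[w]^{(k̄)}}`, the bracket of `t^r h₁(D + r/2)` and
`t^s h₂(D + s/2)` is `t^{r+s} h₃(D + (r+s)/2)` where `h₃` is the following polynomial. -/
noncomputable def brPoly (r s : ℤ) (h₁ h₂ : Polynomial ℂ) : Polynomial ℂ :=
  h₁.comp (X + C ((s : ℂ) / 2)) * h₂.comp (X - C ((r : ℂ) / 2)) -
    h₁.comp (X - C ((s : ℂ) / 2)) * h₂.comp (X + C ((r : ℂ) / 2))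

lemma aux_unit_cancel {a : ℂ} (ha : a ≠ 0) {p q : Polynomial ℂ} (h : p ∣ C a * q) : p ∣ q := by
  have h2 := h.mul_left (C a⁻¹)
  rwa [← mul_assoc, ← C_mul, inv_mul_cancel₀ ha, C_1, one_mul] at h2

lemma aux_key {b P Q : Polynomial ℂ} {γ : ℂ} (hγ : γ ≠ 0)
    (h1 : b ∣ P - Q) (h2 : b ∣ (X + C γ) ^ 2 * P - (X - C γ) ^ 2 * Q) :
    b ∣ X * P ∧ b ∣ X * Q := by
  have h4 : (C (4 * γ) : Polynomial ℂ) = 4 * C γ := by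
    rw [C_mul, map_ofNat]
  have hne : (4 : ℂ) * γ ≠ 0 := by simpa using hγ
  constructor
  · apply aux_unit_cancel hne
    rw [h4, show (4 : Polynomial ℂ) * C γ * (X * P) =
      (-(X - C γ) ^ 2) * (P - Q) + ((X + C γ) ^ 2 * P - (X - C γ) ^ 2 * Q) by ring]
    exact dvd_add (h1.mul_left _) h2
  · apply aux_unit_cancel hne
    rw [h4, show (4 : Polynomial ℂ) * C γ * (X * Q) =
      (-(X + C γ) ^ 2) * (P - Q) + ((X + C γ) ^ 2 * P - (X - C γ) ^ 2 * Q) by ring]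
    exact dvd_add (h1.mul_left _) h2

lemma aux_comp_ne {p : Polynomial ℂ} (hp : p ≠ 0) (c : ℂ) : p.comp (X + C c) ≠ 0 := by
  intro h
  rcases (comp_eq_zero_iff).mp h with h' | ⟨-, h'⟩
  · exact hp h'
  · have := congrArg natDegree h'
    simp [natDegree_X_add_C] at this

lemma aux_comp_ne' {p : Polynomial ℂ} (hp : p ≠ 0) (c : ℂ) : p.comp (X - C c) ≠ 0 := by
  have := aux_comp_ne hp (-c)
  rwa [map_neg, ← sub_eq_add_neg] at this

/-- properties of the characteristic polynomials of a parabolic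
subalgebra `𝒫 = ⊕ 𝒫_j` of `𝒟̂⁻`, where `𝒫_j = {t^j h(D + j/2) : h ∈ I j}`:
(1) `b_k` has the parity of `ℂ[w]^{(k̄)}` (even for `k` odd, odd for `k` even);
(2) `b_k(w) ∣ w·b_{k+1}(w ∓ 1/2)`;
(3) `b_{k+l}(w) ∣ w·b_k(w - l/2)·b_l(w + k/2)`;
(4) all `b_k` are nonzero and `𝒫_{-k} ≠ 0` for all `k ≥ 1`. -/
theorem parabolic_characteristic_polynomials
    (I : ℤ → Submodule ℂ (Polynomial ℂ))
    -- each graded piece consists of polynomials of the correct parity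
    (hparity : ∀ (k : ℤ), ∀ h ∈ I k, h.comp (-X) = (-1 : ℂ) ^ (k + 1) • h)
    -- 𝒫_j is the full graded piece 𝒟̂⁻_j for j ≥ 0
    (hfull : ∀ k : ℤ, 0 ≤ k → ∀ h : Polynomial ℂ,
      h.comp (-X) = (-1 : ℂ) ^ (k + 1) • h → h ∈ I k)
    -- 𝒫 is closed under the Lie bracket
    (hclosed : ∀ (r s : ℤ), ∀ h₁ ∈ I r, ∀ h₂ ∈ I s, brPoly r s h₁ h₂ ∈ I (r + s))
    -- 𝒫 is parabolic: some negative graded piece is nonzero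
    (hpar : ∃ j : ℤ, j < 0 ∧ I j ≠ ⊥)
    -- b k is the characteristic polynomial of 𝒫 in degree -k: the monic generator of
    -- I(-k) as a module over even polynomials, or 0 if I(-k) = 0
    (b : ℕ → Polynomial ℂ)
    (hb : ∀ k : ℕ, 1 ≤ k →
      (b k = 0 ∧ I (-(k : ℤ)) = ⊥) ∨
      ((b k).Monic ∧ ∀ f : Polynomial ℂ,
        f ∈ I (-(k : ℤ)) ↔ ∃ p : Polynomial ℂ, p.comp (-X) = p ∧ f = p * b k)) :
    (∀ k : ℕ, 1 ≤ k → (b k).comp (-X) = (-1 : ℂ) ^ ((k : ℤ) + 1) • b k) ∧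
    (∀ k : ℕ, 1 ≤ k →
      b k ∣ X * (b (k + 1)).comp (X - C (1 / 2 : ℂ)) ∧
      b k ∣ X * (b (k + 1)).comp (X + C (1 / 2 : ℂ))) ∧
    (∀ k l : ℕ, 1 ≤ k → 1 ≤ l →
      b (k + l) ∣
        X * (b k).comp (X - C ((l : ℂ) / 2)) * (b l).comp (X + C ((k : ℂ) / 2))) ∧
    (∀ k : ℕ, 1 ≤ k → b k ≠ 0 ∧ I (-(k : ℤ)) ≠ ⊥) := by
  -- membership of b k and X^2 * b k in I (-k)
  have hmem : ∀ k : ℕ, 1 ≤ k → b k ∈ I (-(k : ℤ)) ∧ X ^ 2 * b k ∈ I (-(k : ℤ)) := by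
    intro k hk
    rcases hb k hk with ⟨h0, hI⟩ | ⟨hm, hiff⟩
    · rw [h0, hI]; simp
    · exact ⟨(hiff _).mpr ⟨1, by simp, (one_mul _).symm⟩,
        (hiff _).mpr ⟨X ^ 2, by simp [pow_comp, neg_sq], rfl⟩⟩
  -- b k divides every element of I (-k)
  have hdvd : ∀ k : ℕ, 1 ≤ k → ∀ f ∈ I (-(k : ℤ)), b k ∣ f := by
    intro k hk f hf
    rcases hb k hk with ⟨h0, hI⟩ | ⟨hm, hiff⟩
    · rw [hI] at hf; simp only [Submodule.mem_bot] at hf; rw [hf]; exact dvd_zero _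
    · obtain ⟨p, -, rfl⟩ := (hiff f).mp hf
      exact dvd_mul_left _ _
  have h1mem : (1 : Polynomial ℂ) ∈ I 1 := hfull 1 one_pos.le 1 (by norm_num)
  have hX2mem : (X ^ 2 : Polynomial ℂ) ∈ I 1 :=
    hfull 1 one_pos.le _ (by simp [pow_comp, neg_sq])
  -- statement (1)
  have s1 : ∀ k : ℕ, 1 ≤ k → (b k).comp (-X) = (-1 : ℂ) ^ ((k : ℤ) + 1) • b k := by
    intro k hk
    rcases hb k hk with ⟨h0, -⟩ | ⟨-, -⟩
    · simp [h0]
    · have h := hparity (-(k : ℤ)) (b k) (hmem k hk).1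
      rwa [show ((-1 : ℂ)) ^ (-(k : ℤ) + 1) = (-1) ^ ((k : ℤ) + 1) by
        rw [show -(k : ℤ) + 1 = ((k : ℤ) + 1) + (-2) * (k : ℤ) by ring,
          zpow_add₀ (by norm_num : (-1 : ℂ) ≠ 0), zpow_mul]
        norm_num] at h
  -- statement (2)
  have s2 : ∀ k : ℕ, 1 ≤ k →
      b k ∣ X * (b (k + 1)).comp (X - C (1 / 2 : ℂ)) ∧
      b k ∣ X * (b (k + 1)).comp (X + C (1 / 2 : ℂ)) := by
    intro k hk
    have hk1 : 1 ≤ k + 1 := le_add_self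
    have m1 : b (k + 1) ∈ I (-((k : ℤ) + 1)) := by
      rw [show -((k : ℤ) + 1) = -((k + 1 : ℕ) : ℤ) by push_cast; ring]
      exact (hmem (k + 1) hk1).1
    have A1 := hclosed 1 (-((k : ℤ) + 1)) 1 h1mem (b (k + 1)) m1
    have A2 := hclosed 1 (-((k : ℤ) + 1)) (X ^ 2) hX2mem (b (k + 1)) m1
    rw [show (1 : ℤ) + -((k : ℤ) + 1) = -(k : ℤ) by ring] at A1 A2
    have d1 := hdvd k hk _ A1
    have d2 := hdvd k hk _ A2
    rw [show brPoly 1 (-((k : ℤ) + 1)) 1 (b (k + 1)) =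
        (b (k + 1)).comp (X - C (1 / 2 : ℂ)) - (b (k + 1)).comp (X + C (1 / 2 : ℂ)) by
      simp only [brPoly, one_comp, one_mul]; norm_num] at d1
    rw [show brPoly 1 (-((k : ℤ) + 1)) (X ^ 2) (b (k + 1)) =
        (X + C (-((k : ℂ) + 1) / 2)) ^ 2 * (b (k + 1)).comp (X - C (1 / 2 : ℂ)) -
        (X - C (-((k : ℂ) + 1) / 2)) ^ 2 * (b (k + 1)).comp (X + C (1 / 2 : ℂ)) by
      simp only [brPoly, pow_comp, X_comp]; push_cast; norm_num] at d2
    have hγ : -((k : ℂ) + 1) / 2 ≠ 0 := by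
      have h1 : ((k : ℂ) + 1) ≠ 0 := Nat.cast_add_one_ne_zero (R := ℂ) k
      exact div_ne_zero (neg_ne_zero.mpr h1) two_ne_zero
    exact aux_key hγ d1 d2
  -- statement (3)
  have s3 : ∀ k l : ℕ, 1 ≤ k → 1 ≤ l →
      b (k + l) ∣
        X * (b k).comp (X - C ((l : ℂ) / 2)) * (b l).comp (X + C ((k : ℂ) / 2)) := by
    intro k l hk hl
    have hkl : 1 ≤ k + l := le_trans hk le_self_add
    have A1 := hclosed (-(k : ℤ)) (-(l : ℤ)) (b k) (hmem k hk).1 (b l) (hmem l hl).1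
    have A2 := hclosed (-(k : ℤ)) (-(l : ℤ)) (X ^ 2 * b k) (hmem k hk).2 (b l) (hmem l hl).1
    rw [show -(k : ℤ) + -(l : ℤ) = -((k + l : ℕ) : ℤ) by push_cast; ring] at A1 A2
    have d1 := hdvd (k + l) hkl _ A1
    have d2 := hdvd (k + l) hkl _ A2
    rw [show brPoly (-(k : ℤ)) (-(l : ℤ)) (b k) (b l) =
        (b k).comp (X - C ((l : ℂ) / 2)) * (b l).comp (X + C ((k : ℂ) / 2)) -
        (b k).comp (X + C ((l : ℂ) / 2)) * (b l).comp (X - C ((k : ℂ) / 2)) by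
      simp only [brPoly]
      push_cast
      rw [show (X + C (-(l : ℂ) / 2)) = X - C ((l : ℂ) / 2) by
            rw [neg_div, map_neg, sub_eq_add_neg],
          show (X - C (-(l : ℂ) / 2)) = X + C ((l : ℂ) / 2) by
            rw [neg_div, map_neg, sub_neg_eq_add],
          show (X + C (-(k : ℂ) / 2)) = X - C ((k : ℂ) / 2) by
            rw [neg_div, map_neg, sub_eq_add_neg],
          show (X - C (-(k : ℂ) / 2)) = X + C ((k : ℂ) / 2) by
            rw [neg_div, map_neg, sub_neg_eq_add]]] at d1
    rw [show brPoly (-(k : ℤ)) (-(l : ℤ)) (X ^ 2 * b k) (b l) =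
        (X + C (-(l : ℂ) / 2)) ^ 2 *
          ((b k).comp (X - C ((l : ℂ) / 2)) * (b l).comp (X + C ((k : ℂ) / 2))) -
        (X - C (-(l : ℂ) / 2)) ^ 2 *
          ((b k).comp (X + C ((l : ℂ) / 2)) * (b l).comp (X - C ((k : ℂ) / 2))) by
      simp only [brPoly, mul_comp, pow_comp, X_comp]
      push_cast
      rw [show (X + C (-(l : ℂ) / 2)) = X - C ((l : ℂ) / 2) by
            rw [neg_div, map_neg, sub_eq_add_neg],
          show (X - C (-(l : ℂ) / 2)) = X + C ((l : ℂ) / 2) by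
            rw [neg_div, map_neg, sub_neg_eq_add],
          show (X + C (-(k : ℂ) / 2)) = X - C ((k : ℂ) / 2) by
            rw [neg_div, map_neg, sub_eq_add_neg],
          show (X - C (-(k : ℂ) / 2)) = X + C ((k : ℂ) / 2) by
            rw [neg_div, map_neg, sub_neg_eq_add]]
      ring] at d2
    have hγ : -(l : ℂ) / 2 ≠ 0 := by
      have h1 : ((l : ℂ)) ≠ 0 := Nat.cast_ne_zero.mpr (by omega)
      exact div_ne_zero (neg_ne_zero.mpr h1) two_ne_zero
    have := (aux_key hγ d1 d2).1
    rwa [← mul_assoc] at this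
  -- statement (4)
  have s4 : ∀ k : ℕ, 1 ≤ k → b k ≠ 0 ∧ I (-(k : ℤ)) ≠ ⊥ := by
    -- downward step via s2
    have step : ∀ k : ℕ, 1 ≤ k → b (k + 1) ≠ 0 → b k ≠ 0 := by
      intro k hk hne h0
      have d := (s2 k hk).1
      rw [h0, zero_dvd_iff, mul_eq_zero] at d
      rcases d with h | h
      · exact X_ne_zero h
      · exact aux_comp_ne' hne _ h
    -- additive closure via s3
    have addstep : ∀ k l : ℕ, 1 ≤ k → 1 ≤ l → b k ≠ 0 → b l ≠ 0 → b (k + l) ≠ 0 := by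
      intro k l hk hl hbk hbl h0
      have d := s3 k l hk hl
      rw [h0, zero_dvd_iff, mul_eq_zero, mul_eq_zero] at d
      rcases d with (h | h) | h
      · exact X_ne_zero h
      · exact aux_comp_ne' hbk _ h
      · exact aux_comp_ne hbl _ h
    -- downward induction
    have down : ∀ d k : ℕ, 1 ≤ k → b (k + d) ≠ 0 → b k ≠ 0 := by
      intro d
      induction d with
      | zero => intro k hk h; simpa using h
      | succ n ih =>
        intro k hk h
        exact ih k hk (step (k + n) (by omega) (by rwa [show k + n + 1 = k + (n + 1) by ring]))
    -- a nonzero b exists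
    obtain ⟨j, hj, hIj⟩ := hpar
    set k₀ : ℕ := (-j).toNat with hk₀def
    have hk₀ : 1 ≤ k₀ := by omega
    have hjk : -(k₀ : ℤ) = j := by omega
    have hb0 : b k₀ ≠ 0 := by
      rcases hb k₀ hk₀ with ⟨-, hI⟩ | ⟨hm, -⟩
      · rw [hjk] at hI; exact absurd hI hIj
      · exact hm.ne_zero
    -- multiples of k₀ are nonzero
    have hmul : ∀ n : ℕ, 1 ≤ n → b (n * k₀) ≠ 0 := by
      intro n hn
      induction n with
      | zero => omega
      | succ m ih =>
        rcases Nat.eq_or_lt_of_le hn with h | h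
        · simpa [← h] using hb0
        · have hm1 : 1 ≤ m := by omega
          have := addstep (m * k₀) k₀ (Nat.mul_pos hm1 hk₀) hk₀ (ih hm1) hb0
          rwa [show m * k₀ + k₀ = (m + 1) * k₀ by ring] at this
    intro k hk
    have hbk : b k ≠ 0 := by
      have hle : k ≤ k * k₀ := Nat.le_mul_of_pos_right k (by omega)
      have := hmul k hk
      exact down (k * k₀ - k) k hk (by rwa [show k + (k * k₀ - k) = k * k₀ by omega])
    refine ⟨hbk, ?_⟩
    intro hI
    have := (hmem k hk).1
    rw [hI, Submodule.mem_bot] at this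
    exact hbk this
  exact ⟨s1, s2, s3, s4⟩
end

section
/- For s = 0, the image of the homomorphism φ_0 : t^k f(D + k/2) ↦ Σ_{j∈ℤ} f(-j + k/2) E_{j-k,j} restricted to 𝒟⁻ (so f ∈ ℂ[w] with f(-w) = (-1)^{k+1}f(w)) lies in the subalgebra b̄⁻_∞ = {(a_{ij}) ∈ gl_∞ : a_{ij} = (-1)^{i+j+1} a_{-j,-i}}, i.e., every matrix φ_0(t^k f(D+k/2)) preserves (infinitesimally) the bilinear form B⁻(v_i, v_j) = (-1)^i δ_{i,-j}. -/
/-!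
Both `B⁻(φ u, v)` and `B⁻(u, φ v)` are sums over `j ∈ supp u` of `u_j v_{k-j}` times
`F(-j) (-1)^{j-k}` and `F(j-k) (-1)^j` respectively, where `F(w) = f(w + k/2)`. The parity of `f`
gives `F(-j) = (-1)^{k+1} F(j-k)`, so the two summands cancel term by term.
-/

open Polynomial

noncomputable abbrev Vmod := ℤ →₀ ℂ

/-- `φ_0(t^k F(D))` acting on `⊕ ℂ v_j` by `v_j ↦ F(-j) v_{j-k}`
(here the operator `t^k F(D)` is encoded by its degree `k` and polynomial `F`). -/
noncomputable def Phi0 (k : ℤ) (F : Polynomial ℂ) (v : Vmod) : Vmod :=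
  v.sum fun j c => Finsupp.single (j - k) (c * F.eval (-(j : ℂ)))

/-- The bilinear form `B⁻(v_i, v_j) = (-1)^i δ_{i,-j}`. -/
noncomputable def Bform (u v : Vmod) : ℂ :=
  u.sum fun i c => c * (-1 : ℂ) ^ i * v (-i)

lemma Phi0_apply (k : ℤ) (F : Polynomial ℂ) (v : Vmod) (m : ℤ) :
    Phi0 k F v m = v (m + k) * F.eval (-((m + k : ℤ) : ℂ)) := by
  classical
  rw [Phi0, Finsupp.sum_apply, Finsupp.sum, Finset.sum_eq_single (m + k)]
  · rw [add_sub_cancel_right, Finsupp.single_eq_same]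
  · intro j _ hne
    rw [Finsupp.single_apply, if_neg (by omega)]
  · intro h
    rw [Finsupp.notMem_support_iff.mp h, zero_mul, Finsupp.single_zero, Finsupp.zero_apply]

lemma Bform_Phi0_left (k : ℤ) (F : Polynomial ℂ) (u v : Vmod) :
    Bform (Phi0 k F u) v =
      u.sum fun j c => c * F.eval (-(j : ℂ)) * (-1 : ℂ) ^ (j - k) * v (k - j) := by
  rw [Bform, Phi0, Finsupp.sum_sum_index (fun _ => by ring) (fun _ _ _ => by ring)]
  refine Finsupp.sum_congr fun j _ => ?_
  rw [Finsupp.sum_single_index (by ring), neg_sub]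

lemma Bform_Phi0_right (k : ℤ) (F : Polynomial ℂ) (u v : Vmod) :
    Bform u (Phi0 k F v) =
      u.sum fun j c => c * (-1 : ℂ) ^ j * (v (k - j) * F.eval ((j : ℂ) - k)) := by
  refine Finsupp.sum_congr fun j _ => ?_
  rw [Phi0_apply, neg_add_eq_sub]
  push_cast
  rw [neg_sub]

lemma eval_neg_of_comp_neg_eq_smul {R : Type*} [CommRing R] {f : R[X]} {s : R}
    (hf : f.comp (-X) = s • f) (x : R) : f.eval (-x) = s * f.eval x := by
  simpa [eval_comp] using congrArg (eval x) hf

lemma eval_comp_add_half_neg {k : ℤ} {f : Polynomial ℂ}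
    (hf : f.comp (-X) = (-1 : ℂ) ^ (k + 1) • f) (x : ℂ) :
    (f.comp (X + C ((k : ℂ) / 2))).eval (-x) =
      (-1 : ℂ) ^ (k + 1) * (f.comp (X + C ((k : ℂ) / 2))).eval (x - k) := by
  simp only [eval_comp, eval_add, eval_X, eval_C]
  rw [← eval_neg_of_comp_neg_eq_smul hf]
  ring_nf

lemma neg_one_zpow_add_one_mul_zpow_sub (j k : ℤ) :
    (-1 : ℂ) ^ (k + 1) * (-1 : ℂ) ^ (j - k) = -(-1 : ℂ) ^ j := by
  rw [← zpow_add₀ (neg_ne_zero.mpr one_ne_zero), show k + 1 + (j - k) = j + 1 by ring,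
    zpow_add_one₀ (neg_ne_zero.mpr one_ne_zero), mul_neg_one]

/-- for every element `t^k f(D + k/2)` of `𝒟⁻` (so
`f(-w) = (-1)^{k+1} f(w)`), the matrix `φ_0(t^k f(D + k/2)) = Σ_j f(-j+k/2) E_{j-k,j}`
infinitesimally preserves the bilinear form `B⁻`, i.e. its image lies in
`b̄⁻_∞ = {(a_{ij}) : a_{ij} = (-1)^{i+j+1} a_{-j,-i}}`. -/
theorem Phi0_image_in_binfinity (k : ℤ) (f : Polynomial ℂ)
    (hf : f.comp (-X) = (-1 : ℂ) ^ (k + 1) • f) :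
    ∀ u v : Vmod,
      Bform (Phi0 k (f.comp (X + C ((k : ℂ) / 2))) u) v +
        Bform u (Phi0 k (f.comp (X + C ((k : ℂ) / 2))) v) = 0 := by
  intro u v
  rw [Bform_Phi0_left, Bform_Phi0_right, ← Finsupp.sum_add]
  refine Finset.sum_eq_zero fun j _ => ?_
  dsimp only
  rw [eval_comp_add_half_neg hf]
  linear_combination u j * (f.comp (X + C ((k : ℂ) / 2))).eval ((j : ℂ) - k) * v (k - j) *
    neg_one_zpow_add_one_mul_zpow_sub j k
end

section
/- Define operators Ψ^{m,n}(z) built from l pairs of free fermion fields as Ψ^{m,n} = Σ_k (:∂^m ψ^{+,k} ∂^n ψ^{-,k}: + :∂^m ψ^{-,k} ∂^n ψ^{+,k}:), satisfying the symmetry Ψ^{m,n} = -Ψ^{n,m} and the Leibniz recursion ∂Ψ^{m,n} = Ψ^{m+1,n} + Ψ^{m,n+1}. Abstractly: let V be a ℂ-vector space with elements Ψ^{m,n} (m,n ∈ ℤ≥0) satisfying Ψ^{m,n} = -Ψ^{n,m} and a derivation ∂ with ∂Ψ^{m,n} = Ψ^{m+1,n} + Ψ^{m,n+1}, and set W^j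 = Ψ^{j,0} for odd j. Then for all m,n, Ψ^{m,n} lies in the span of ∂^i W^{m+n-i} for 0 ≤ i ≤ m+n with i ≡ m+n-1 (mod 2). -/
/-!
Modulo the span of lower-order derivatives, the Leibniz recursion
`Ψ^{m,n+1} = ∂Ψ^{m,n} - Ψ^{m+1,n}` moves the second index onto the first at the cost of a sign,
so `Ψ^{m,n} ≡ (-1)^n W^{m+n}`. For `m + n` odd this is the claim; for `m + n = s` even,
comparing `Ψ^{0,s} ≡ Ψ^{s,0}` with antisymmetry `Ψ^{0,s} = -Ψ^{s,0}` shows `2 Ψ^{s,0} ≡ 0`.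
-/

section

variable {R V : Type*} [Ring R] [AddCommGroup V] [Module R V] (d : V →ₗ[R] V) (Ψ : ℕ → ℕ → V)

/-- The span of the `∂^i W^{s-i}` with `s - i` odd, written `Odd (i + s)` to avoid truncated
subtraction. -/
def derivSpan (s : ℕ) : Submodule R V :=
  Submodule.span R {v : V | ∃ i : ℕ, i ≤ s ∧ Odd (i + s) ∧ v = (d ^ i) (Ψ (s - i) 0)}

variable {d Ψ}

theorem apply_mem_derivSpan_succ {s : ℕ} {x : V} (hx : x ∈ derivSpan d Ψ s) :
    d x ∈ derivSpan d Ψ (s + 1) := by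
  induction hx using Submodule.span_induction with
  | mem v hv =>
    obtain ⟨i, hi, hodd, rfl⟩ := hv
    refine Submodule.subset_span ⟨i + 1, by omega, by grind, ?_⟩
    rw [show s + 1 - (i + 1) = s - i by omega, pow_succ', Module.End.mul_apply]
  | zero => simp
  | add x y _ _ hx hy => simpa only [map_add] using add_mem hx hy
  | smul c x _ hx => simpa only [map_smul] using Submodule.smul_mem _ c hx

theorem Psi_sub_neg_one_pow_smul_mem_derivSpan
    (hder : ∀ m n : ℕ, d (Ψ m n) = Ψ (m + 1) n + Ψ m (n + 1)) {s : ℕ}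
    (hlower : ∀ m n : ℕ, m + n < s → Ψ m n ∈ derivSpan d Ψ (m + n)) (n : ℕ) :
    ∀ m : ℕ, m + n = s → Ψ m n - ((-1) ^ n : R) • Ψ s 0 ∈ derivSpan d Ψ s := by
  induction n with
  | zero =>
    rintro m rfl
    simp
  | succ n ih =>
    intro m hmn
    have hstep : Ψ m (n + 1) - ((-1) ^ (n + 1) : R) • Ψ s 0 =
        d (Ψ m n) - (Ψ (m + 1) n - ((-1) ^ n : R) • Ψ s 0) := by
      rw [hder, pow_succ, mul_neg_one, neg_smul]
      abel
    rw [hstep]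
    refine sub_mem ?_ (ih (m + 1) (by omega))
    simpa only [show m + n + 1 = s by omega] using
      apply_mem_derivSpan_succ (hlower m n (by omega))

theorem Psi_mem_derivSpan_of_sub_mem [Invertible (2 : R)]
    (hanti : ∀ m n : ℕ, Ψ m n = -Ψ n m) {s : ℕ}
    (hcongr : ∀ m n : ℕ, m + n = s → Ψ m n - ((-1) ^ n : R) • Ψ s 0 ∈ derivSpan d Ψ s)
    {m n : ℕ} (hmn : m + n = s) : Ψ m n ∈ derivSpan d Ψ s := by
  have hW : Ψ s 0 ∈ derivSpan d Ψ s := by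
    rcases Nat.even_or_odd s with hs | hs
    · have htwo : (2 : R) • Ψ s 0 ∈ derivSpan d Ψ s := by
        have h := neg_mem (hcongr 0 s (zero_add s))
        rwa [hanti 0 s, hs.neg_one_pow, one_smul, neg_sub, sub_neg_eq_add, ← two_smul R] at h
      simpa only [invOf_smul_smul] using Submodule.smul_mem _ (⅟2 : R) htwo
    · exact Submodule.subset_span ⟨0, s.zero_le, by simpa using hs, by simp⟩
  simpa using add_mem (hcongr m n hmn) (Submodule.smul_mem _ ((-1) ^ n : R) hW)

theorem Psi_mem_derivSpan [Invertible (2 : R)]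
    (hanti : ∀ m n : ℕ, Ψ m n = -Ψ n m)
    (hder : ∀ m n : ℕ, d (Ψ m n) = Ψ (m + 1) n + Ψ m (n + 1)) (m n : ℕ) :
    Ψ m n ∈ derivSpan d Ψ (m + n) := by
  induction hs : m + n using Nat.strong_induction_on generalizing m n with
  | _ s ih =>
    refine Psi_mem_derivSpan_of_sub_mem hanti (fun m' n' h ↦ ?_) hs
    exact Psi_sub_neg_one_pow_smul_mem_derivSpan hder
      (fun a b hab ↦ ih (a + b) hab a b rfl) n' m' h

end

/-- let `V` be a ℂ-vector space with elements `Ψ^{m,n}` satisfying the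
antisymmetry `Ψ^{m,n} = -Ψ^{n,m}` and the Leibniz recursion
`∂ Ψ^{m,n} = Ψ^{m+1,n} + Ψ^{m,n+1}` for a linear map `∂`, and set `W^j = Ψ^{j,0}`
(relevant for `j` odd).  Then each `Ψ^{m,n}` lies in the span of the elements
`∂^i W^{m+n-i}` for `0 ≤ i ≤ m+n` with `i ≡ m+n-1 (mod 2)`
(i.e. `i + m + n` odd, so that `m+n-i` is odd). -/
theorem Psi_in_span_of_derivatives_of_W
    (V : Type*) [AddCommGroup V] [Module ℂ V]
    (d : V →ₗ[ℂ] V) (Ψ : ℕ → ℕ → V)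
    (hanti : ∀ m n : ℕ, Ψ m n = -Ψ n m)
    (hder : ∀ m n : ℕ, d (Ψ m n) = Ψ (m + 1) n + Ψ m (n + 1)) :
    ∀ m n : ℕ, Ψ m n ∈ Submodule.span ℂ
      {v : V | ∃ i : ℕ, i ≤ m + n ∧ Odd (i + m + n) ∧
        v = (d ^ i) (Ψ (m + n - i) 0)} := by
  intro m n
  simpa only [derivSpan, add_assoc] using Psi_mem_derivSpan hanti hder m n
end
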